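/- arXiv:math/0602027 — 9 statements merged into one kernel-verified Lean document; each statement's English description precedes it below -/
import Mathlib

section
/- If G is a simple graph of order n ≥ 2 with girth at least 5 (no triangles and no 4-cycles), then the largest eigenvalue of the adjacency matrix of G is at most √(n-1). -/
open SimpleGraph Finset Matrix

/-- Largest eigenvalue of a real matrix, as the supremum of its (real) eigenvalues. -/
noncomputable def maxEig {V : Type*} [Fintype V] (A : Matrix V V ℝ) : ℝ :=
  sSup {μ : ℝ | ∃ v : V → ℝ, v ≠ 0 ∧ A.mulVec v = μ • v}

/-- The eigenvalues of a real matrix with multiplicity, sorted increasingly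
(the real roots of the characteristic polynomial). -/
noncomputable def eigsSorted {V : Type*} [Fintype V] [DecidableEq V]
    (A : Matrix V V ℝ) : List ℝ :=
  A.charpoly.roots.sort (· ≤ ·)

/-- The second smallest eigenvalue (with multiplicity) of a real matrix. -/
noncomputable def secondEig {V : Type*} [Fintype V] [DecidableEq V]
    (A : Matrix V V ℝ) : ℝ :=
  (eigsSorted A).getD 1 0

/-- `G` has no triangles. -/
def TriangleFree {V : Type*} (G : SimpleGraph V) : Prop :=
  ∀ a b c : V, G.Adj a b → G.Adj b c → G.Adj c a → False

/-- `G` has no 4-cycles. -/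
def C4Free {V : Type*} (G : SimpleGraph V) : Prop :=
  ∀ a b c d : V, a ≠ c → b ≠ d →
    G.Adj a b → G.Adj b c → G.Adj c d → G.Adj d a → False

/-- `X` is a dominating set of `G`. -/
def IsDominatingSet {V : Type*} (G : SimpleGraph V) (X : Finset V) : Prop :=
  ∀ v : V, v ∉ X → ∃ u ∈ X, G.Adj u v

/-- The domination number of `G`. -/
noncomputable def domNum {V : Type*} [Fintype V] (G : SimpleGraph V) : ℕ :=
  sInf {k : ℕ | ∃ X : Finset V, IsDominatingSet G X ∧ X.card = k}

/-- Number of edges between `X` and its complement. -/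
def crossEdges {V : Type*} [Fintype V] [DecidableEq V] (G : SimpleGraph V)
    [DecidableRel G.Adj] (X : Finset V) : ℕ :=
  (Finset.univ.filter fun p : V × V => p.1 ∈ X ∧ p.2 ∉ X ∧ G.Adj p.1 p.2).card

/-!
If `A v = μ v` then `A² v = μ² v`, so by Gershgorin's theorem `μ²` is at most a row sum of `A²`,
i.e. the number of walks `i - j - k` of length two from some vertex `i`. Sending such a walk to
`k`, or to `j` when `k = i`, is injective into `V \ {i}` as soon as there are no triangles and no
4-cycles, so there are at most `n - 1` of them.
-/

theorem Matrix.norm_le_of_mulVec_eq_smul {K V : Type*} [NormedField K] [Fintype V]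
    [DecidableEq V] {A : Matrix V V K} {c : ℝ} {μ : K} {v : V → K}
    (hrow : ∀ i, ∑ j, ‖A i j‖ ≤ c) (hv : v ≠ 0) (hAv : A *ᵥ v = μ • v) : ‖μ‖ ≤ c := by
  have hμ : Module.End.HasEigenvalue (Matrix.toLin' A) μ :=
    Module.End.hasEigenvalue_of_hasEigenvector
      ⟨Module.End.mem_eigenspace_iff.mpr (by simpa using hAv), hv⟩
  obtain ⟨k, hk⟩ := eigenvalue_mem_ball hμ
  rw [Metric.mem_closedBall, dist_eq_norm] at hk
  calc ‖μ‖ ≤ ‖A k k‖ + ‖μ - A k k‖ := by simpa using norm_add_le (A k k) (μ - A k k)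
    _ ≤ ‖A k k‖ + ∑ j ∈ univ.erase k, ‖A k j‖ := by gcongr
    _ = ∑ j, ‖A k j‖ := add_sum_erase _ (fun j => ‖A k j‖) (mem_univ k)
    _ ≤ c := hrow k

namespace SimpleGraph

variable {V : Type*} [Fintype V] {G : SimpleGraph V} [DecidableRel G.Adj]

theorem sum_adjMatrix_mul_self_apply {α : Type*} [NonAssocSemiring α] (i : V) :
    ∑ j, (G.adjMatrix α * G.adjMatrix α) i j = ∑ j ∈ G.neighborFinset i, (G.degree j : α) := by
  simp only [adjMatrix_mul_apply]
  rw [sum_comm]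
  refine sum_congr rfl fun j _ => ?_
  simp [adjMatrix_apply, ← neighborFinset_eq_filter]

theorem adjMatrix_mul_self_apply_nonneg {α : Type*} [Semiring α] [PartialOrder α]
    [IsOrderedRing α] (i j : V) : 0 ≤ (G.adjMatrix α * G.adjMatrix α) i j := by
  rw [adjMatrix_mul_apply]
  exact sum_nonneg fun k _ => by rw [adjMatrix_apply]; split_ifs <;> simp

theorem sum_degree_neighborFinset_lt_card [DecidableEq V] (h3 : TriangleFree G)
    (h4 : C4Free G) (i : V) :
    ∑ j ∈ G.neighborFinset i, G.degree j < Fintype.card V := by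
  set f : (Σ _ : V, V) → V := fun p => if p.2 = i then p.1 else p.2
  have hmaps : ∀ p ∈ (G.neighborFinset i).sigma fun j => G.neighborFinset j,
      f p ∈ univ.erase i := by
    rintro ⟨j, k⟩ hp
    simp only [mem_sigma, mem_neighborFinset] at hp
    by_cases hk : k = i <;> simp [f, hk, hp.1.ne']
  have hinj : Set.InjOn f ((G.neighborFinset i).sigma fun j => G.neighborFinset j) := by
    rintro ⟨j, k⟩ hp ⟨j', k'⟩ hp' heq
    simp only [coe_sigma, Set.mem_sigma_iff, coe_neighborFinset, mem_neighborSet, f]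
      at hp hp' heq
    obtain ⟨hij, hjk⟩ := hp
    obtain ⟨hij', hjk'⟩ := hp'
    by_cases hk : k = i <;> by_cases hk' : k' = i <;> simp only [hk, hk', if_true, if_false] at heq
    · subst hk hk' heq; rfl
    · rw [hk] at hjk; rw [← heq] at hjk'; exact (h3 i j' j hij' hjk' hjk).elim
    · rw [hk'] at hjk'; rw [heq] at hjk; exact (h3 i j j' hij hjk hjk').elim
    · subst heq
      by_cases hj : j = j'
      · subst hj; rfl
      · exact (h4 i j k j' (Ne.symm hk) hj hij hjk hjk'.symm hij'.symm).elim
  calc ∑ j ∈ G.neighborFinset i, G.degree j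
      = #((G.neighborFinset i).sigma fun j => G.neighborFinset j) := by simp [card_sigma]
    _ ≤ #(univ.erase i) := card_le_card_of_injOn f hmaps hinj
    _ < Fintype.card V := card_erase_lt_of_mem (mem_univ i)

end SimpleGraph

theorem stmt_0_general {n : ℕ} (G : SimpleGraph (Fin n)) [DecidableRel G.Adj]
    (h3 : TriangleFree G) (h4 : C4Free G) :
    maxEig (G.adjMatrix ℝ) ≤ Real.sqrt ((n : ℝ) - 1) := by
  refine Real.sSup_le (fun μ ⟨v, hv, hAv⟩ => ?_) (Real.sqrt_nonneg _)
  have hA2v : (G.adjMatrix ℝ * G.adjMatrix ℝ) *ᵥ v = μ ^ 2 • v := by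
    rw [← mulVec_mulVec, hAv, mulVec_smul, hAv, smul_smul, sq]
  have hrow : ∀ i, ∑ j, ‖(G.adjMatrix ℝ * G.adjMatrix ℝ) i j‖ ≤ (n : ℝ) - 1 := fun i => by
    have hlt := sum_degree_neighborFinset_lt_card h3 h4 i
    rw [Fintype.card_fin] at hlt
    have hle : ∑ j ∈ G.neighborFinset i, (G.degree j : ℝ) + 1 ≤ n := by exact_mod_cast hlt
    simp_rw [Real.norm_of_nonneg (adjMatrix_mul_self_apply_nonneg _ _),
      sum_adjMatrix_mul_self_apply]
    linarith
  have hμ2 : μ ^ 2 ≤ (n : ℝ) - 1 :=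
    (le_abs_self _).trans (by simpa using norm_le_of_mulVec_eq_smul hrow hv hA2v)
  exact (le_abs_self μ).trans (Real.abs_le_sqrt hμ2)

theorem stmt_0 {n : ℕ} (hn : 2 ≤ n) (G : SimpleGraph (Fin n)) [DecidableRel G.Adj]
    (h3 : TriangleFree G) (h4 : C4Free G) :
    maxEig (G.adjMatrix ℝ) ≤ Real.sqrt ((n : ℝ) - 1) :=
  stmt_0_general G h3 h4
end

section
/- Let G be a simple graph with no triangles and no 4-cycles. Then for every vertex u, the sum of the degrees of the neighbors of u is at most n - 1, where n is the number of vertices of G. -/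
open SimpleGraph Finset Matrix

/- For each neighbour `v` of `u`, the set `{v} ∪ Γ(v) \ {u}` has exactly `d(v)` elements
and avoids `u`. Two such sets for distinct neighbours `v, w` of `u` are disjoint: `v ∈ Γ(w)` would
close a triangle `u v w`, and a common neighbour `x ≠ u` would close a 4-cycle `u v x w`. Hence
their union, of size `Σ_{v ∈ Γ(u)} d(v)`, fits into the `n - 1` vertices other than `u`. -/

namespace SimpleGraph

variable {V : Type*} [DecidableEq V] {G : SimpleGraph V} [G.LocallyFinite] {u v w : V}

theorem card_insert_neighborFinset_erase_of_adj (huv : G.Adj u v) :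
    #((insert v (G.neighborFinset v)).erase u) = G.degree v := by
  rw [card_erase_of_mem (mem_insert_of_mem ((mem_neighborFinset G v u).2 huv.symm)),
    card_insert_of_notMem (notMem_neighborFinset_self G v), card_neighborFinset_eq_degree,
    Nat.add_sub_cancel]

theorem disjoint_insert_neighborFinset_erase (h3 : TriangleFree G) (h4 : C4Free G)
    (huv : G.Adj u v) (huw : G.Adj u w) (hvw : v ≠ w) :
    Disjoint ((insert v (G.neighborFinset v)).erase u)
      ((insert w (G.neighborFinset w)).erase u) := by
  refine Finset.disjoint_left.2 fun x hxv hxw => ?_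
  simp only [mem_erase, mem_insert, mem_neighborFinset] at hxv hxw
  obtain ⟨hxu, rfl | hvx⟩ := hxv <;> obtain ⟨-, rfl | hwx⟩ := hxw
  · exact hvw rfl
  · exact h3 u x w huv hwx.symm huw.symm
  · exact h3 u v x huv hvx huw.symm
  · exact h4 u v x w hxu.symm hvw huv hvx hwx.symm huw.symm

end SimpleGraph

theorem stmt_2 {V : Type*} [Fintype V] [DecidableEq V] (G : SimpleGraph V)
    [DecidableRel G.Adj] (h3 : TriangleFree G) (h4 : C4Free G) (u : V) :
    ∑ v ∈ G.neighborFinset u, G.degree v ≤ Fintype.card V - 1 := by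
  set T : V → Finset V := fun v => (insert v (G.neighborFinset v)).erase u
  have hdisj : (G.neighborFinset u : Set V).PairwiseDisjoint T := fun v hv w hw hvw =>
    disjoint_insert_neighborFinset_erase h3 h4 ((mem_neighborFinset G u v).1 hv)
      ((mem_neighborFinset G u w).1 hw) hvw
  calc ∑ v ∈ G.neighborFinset u, G.degree v
      = ∑ v ∈ G.neighborFinset u, #(T v) :=
        sum_congr rfl fun v hv =>
          (card_insert_neighborFinset_erase_of_adj ((mem_neighborFinset G u v).1 hv)).symm
    _ = #((G.neighborFinset u).biUnion T) := (card_biUnion hdisj).symm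
    _ ≤ #(univ.erase u) := card_le_card <| biUnion_subset.2 fun v _ =>
        erase_subset_erase u (subset_univ _)
    _ = Fintype.card V - 1 := by rw [card_erase_of_mem (mem_univ u), card_univ]
end

section
/- For every simple graph G, the largest eigenvalue of its adjacency matrix satisfies μ(G)² ≤ max over vertices u of Σ_{v ∈ Γ(u)} d(v). -/
open SimpleGraph Finset Matrix

theorem stmt_4 {n : ℕ} (hn : 0 < n) (G : SimpleGraph (Fin n)) [DecidableRel G.Adj] :
    maxEig (G.adjMatrix ℝ) ^ 2 ≤
      Finset.univ.sup' ⟨⟨0, hn⟩, Finset.mem_univ _⟩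
        (fun u => ∑ v ∈ G.neighborFinset u, (G.degree v : ℝ)) := by
  set M := Finset.univ.sup' ⟨⟨0, hn⟩, Finset.mem_univ _⟩
      (fun u => ∑ v ∈ G.neighborFinset u, (G.degree v : ℝ)) with hMdef
  have hM0 : 0 ≤ M := by
    refine le_trans ?_ (Finset.le_sup' _ (Finset.mem_univ (⟨0, hn⟩ : Fin n)))
    positivity
  set S := {μ : ℝ | ∃ v : Fin n → ℝ, v ≠ 0 ∧ (G.adjMatrix ℝ).mulVec v = μ • v} with hSdef
  have key : ∀ μ ∈ S, μ ^ 2 ≤ M := by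
    rintro μ ⟨v, hv0, hv⟩
    obtain ⟨u, -, hu⟩ := Finset.exists_max_image Finset.univ (fun w => |v w|)
      ⟨(⟨0, hn⟩ : Fin n), Finset.mem_univ _⟩
    have hupos : 0 < |v u| := by
      obtain ⟨w, hw⟩ := Function.ne_iff.mp hv0
      exact lt_of_lt_of_le (abs_pos.mpr hw) (hu w (Finset.mem_univ w))
    have h2 : (G.adjMatrix ℝ).mulVec ((G.adjMatrix ℝ).mulVec v) = (μ ^ 2) • v := by
      rw [hv, Matrix.mulVec_smul, hv, smul_smul, sq]
    have h3 : μ ^ 2 * v u = ∑ k ∈ G.neighborFinset u, ∑ j ∈ G.neighborFinset k, v j := by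
      have h := congrFun h2 u
      rw [SimpleGraph.adjMatrix_mulVec_apply] at h
      simp only [SimpleGraph.adjMatrix_mulVec_apply] at h
      simpa using h.symm
    have h4 : μ ^ 2 * |v u| ≤ M * |v u| := by
      calc μ ^ 2 * |v u| = |μ ^ 2 * v u| := by
            rw [abs_mul, abs_of_nonneg (sq_nonneg μ)]
        _ ≤ ∑ k ∈ G.neighborFinset u, ∑ j ∈ G.neighborFinset k, |v j| := by
            rw [h3]
            refine (Finset.abs_sum_le_sum_abs _ _).trans (Finset.sum_le_sum fun k _ => ?_)
            exact Finset.abs_sum_le_sum_abs _ _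
        _ ≤ ∑ k ∈ G.neighborFinset u, ∑ j ∈ G.neighborFinset k, |v u| :=
            Finset.sum_le_sum fun k _ => Finset.sum_le_sum fun j _ => hu j (Finset.mem_univ j)
        _ = (∑ k ∈ G.neighborFinset u, (G.degree k : ℝ)) * |v u| := by
            rw [Finset.sum_mul]
            refine Finset.sum_congr rfl fun k _ => ?_
            rw [Finset.sum_const, SimpleGraph.card_neighborFinset_eq_degree, nsmul_eq_mul]
        _ ≤ M * |v u| := by
            refine mul_le_mul_of_nonneg_right ?_ (abs_nonneg _)
            rw [hMdef]
            exact Finset.le_sup' (fun u => ∑ v ∈ G.neighborFinset u, (G.degree v : ℝ)) (Finset.mem_univ u)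
    exact le_of_mul_le_mul_right h4 hupos
  have hub : ∀ x ∈ S, x ≤ Real.sqrt M := fun x hx =>
    calc x ≤ |x| := le_abs_self x
      _ = Real.sqrt (x ^ 2) := (Real.sqrt_sq_eq_abs x).symm
      _ ≤ Real.sqrt M := Real.sqrt_le_sqrt (key x hx)
  show sSup S ^ 2 ≤ M
  by_cases hS : S.Nonempty
  · obtain ⟨x0, hx0⟩ := hS
    have h1 : sSup S ≤ Real.sqrt M := Real.sSup_le hub (Real.sqrt_nonneg M)
    have hlb : -Real.sqrt M ≤ x0 := by
      have habs : |x0| ≤ Real.sqrt M := by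
        rw [← Real.sqrt_sq_eq_abs]; exact Real.sqrt_le_sqrt (key x0 hx0)
      linarith [neg_abs_le x0, abs_nonneg x0]
    have h2 : -Real.sqrt M ≤ sSup S := hlb.trans (le_csSup ⟨Real.sqrt M, hub⟩ hx0)
    calc sSup S ^ 2 ≤ Real.sqrt M ^ 2 := sq_le_sq' h2 h1
      _ = M := Real.sq_sqrt hM0
  · rw [Set.not_nonempty_iff_eq_empty.mp hS, Real.sSup_empty]
    simpa using hM0
end

section
/- If G is a simple graph on n ≥ 2 vertices with at least one edge, then the largest Laplacian eigenvalue of G is at least Δ(G) + 1, where Δ(G) is the maximum degree. -/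
open SimpleGraph Finset Matrix

/-! The star vector `x` at a vertex `u` of degree `d` (`x u = d`, `x w = -1` on the neighbours of
`u`, `0` elsewhere) has `x ⬝ᵥ x = d (d + 1)`, while the `d` edges at `u` alone contribute
`d (d + 1)²` to the Laplacian form `x ⬝ᵥ L x = ∑_{ij ∈ E} (x i - x j)²`. The largest eigenvalue of
a symmetric matrix bounds each of its Rayleigh quotients (their supremum is an eigenvalue), so
`λ(G) ≥ d + 1`; take `u` of maximum degree. -/

namespace LinearMap.IsSymmetric

variable {𝕜 E : Type*} [RCLike 𝕜] [NormedAddCommGroup E] [InnerProductSpace 𝕜 E]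
  [FiniteDimensional 𝕜 E] [Nontrivial E] {T : E →ₗ[𝕜] E}

theorem exists_hasEigenvalue_forall_re_inner_le (hT : T.IsSymmetric) :
    ∃ μ : ℝ, Module.End.HasEigenvalue T μ ∧ ∀ x, RCLike.re (inner 𝕜 (T x) x) ≤ μ * ‖x‖ ^ 2 := by
  refine ⟨_, hT.hasEigenvalue_iSup_of_finiteDimensional, fun x => ?_⟩
  rcases eq_or_ne x 0 with rfl | hx
  · simp
  have hbdd : BddAbove (Set.range fun y : {y : E // y ≠ 0} =>
      RCLike.re (inner 𝕜 (T y) (y : E)) / ‖(y : E)‖ ^ 2) :=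
    ⟨‖LinearMap.toContinuousLinearMap T‖, by
      rintro _ ⟨y, rfl⟩
      exact (le_abs_self _).trans ((LinearMap.toContinuousLinearMap T).rayleighQuotient_le_norm y)⟩
  rw [← div_le_iff₀ (by positivity)]
  exact le_ciSup hbdd ⟨x, hx⟩

end LinearMap.IsSymmetric

section maxEig

variable {V : Type*} [Fintype V]

theorem Matrix.finite_setOf_exists_mulVec_eq_smul (A : Matrix V V ℝ) :
    {μ : ℝ | ∃ v : V → ℝ, v ≠ 0 ∧ A *ᵥ v = μ • v}.Finite :=
  (Module.End.finite_hasEigenvalue A.mulVecLin).subset fun _ ⟨_, hv, hAv⟩ =>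
    Module.End.hasEigenvalue_of_hasEigenvector ⟨Module.End.mem_eigenspace_iff.mpr hAv, hv⟩

theorem Matrix.IsHermitian.dotProduct_mulVec_le_maxEig_mul {A : Matrix V V ℝ}
    (hA : A.IsHermitian) (v : V → ℝ) : v ⬝ᵥ A *ᵥ v ≤ maxEig A * (v ⬝ᵥ v) := by
  classical
  cases isEmpty_or_nonempty V
  · simp [dotProduct]
  obtain ⟨μ, hμ, hle⟩ :=
    (isSymmetric_toEuclideanLin_iff.mpr hA).exists_hasEigenvalue_forall_re_inner_le
  obtain ⟨w, hw, hw0⟩ := hμ.exists_hasEigenvector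
  have hμ_le : μ ≤ maxEig A := by
    refine le_csSup (finite_setOf_exists_mulVec_eq_smul A).bddAbove
      ⟨WithLp.ofLp w, by simpa using hw0, ?_⟩
    simpa [ofLp_toLpLin] using congrArg WithLp.ofLp (Module.End.mem_eigenspace_iff.mp hw)
  have key := hle (WithLp.toLp 2 v)
  rw [← real_inner_self_eq_norm_sq, real_inner_comm, EuclideanSpace.inner_toLp_toLp, toLpLin_toLp,
    toLin'_apply, EuclideanSpace.inner_toLp_toLp] at key
  simp only [star_trivial, RCLike.re_to_real] at key
  calc v ⬝ᵥ A *ᵥ v = A *ᵥ v ⬝ᵥ v := dotProduct_comm _ _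
    _ ≤ μ * (v ⬝ᵥ v) := key
    _ ≤ maxEig A * (v ⬝ᵥ v) := by
      gcongr
      exact Finset.sum_nonneg fun i _ => mul_self_nonneg (v i)

end maxEig

theorem Finset.sum_apply_add_sum_apply_le_sum_sum {ι M : Type*} [Fintype ι] [DecidableEq ι]
    [AddCommMonoid M] [PartialOrder M] [IsOrderedAddMonoid M]
    {g : ι → ι → M} (hg : ∀ i j, 0 ≤ g i j) (u : ι) (hu : g u u = 0) :
    ∑ j, g u j + ∑ i, g i u ≤ ∑ i, ∑ j, g i j := by
  rw [← add_sum_erase _ (fun i => ∑ j, g i j) (mem_univ u),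
    ← add_sum_erase _ (fun i => g i u) (mem_univ u), hu, zero_add]
  gcongr with i
  exact single_le_sum (fun j _ => hg i j) (mem_univ u)

namespace SimpleGraph

variable {V : Type*} [Fintype V] [DecidableEq V] (G : SimpleGraph V) [DecidableRel G.Adj]

theorem sum_neighborFinset_sq_sub_le_dotProduct_lapMatrix_mulVec (x : V → ℝ) (u : V) :
    ∑ j ∈ G.neighborFinset u, (x u - x j) ^ 2 ≤ x ⬝ᵥ G.lapMatrix ℝ *ᵥ x := by
  have hrow : ∑ j, (if G.Adj u j then (x u - x j) ^ 2 else 0) =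
      ∑ j ∈ G.neighborFinset u, (x u - x j) ^ 2 := by
    rw [← sum_filter, neighborFinset_eq_filter]
  have hcol : ∑ i, (if G.Adj i u then (x i - x u) ^ 2 else 0) =
      ∑ j ∈ G.neighborFinset u, (x u - x j) ^ 2 := by
    rw [← hrow]
    exact sum_congr rfl fun i _ => by simp only [G.adj_comm i u, ← neg_sub (x u), neg_sq]
  have hsum := sum_apply_add_sum_apply_le_sum_sum
    (g := fun i j => if G.Adj i j then (x i - x j) ^ 2 else 0)
    (fun i j => by positivity) u (by simp)
  rw [← toLinearMap₂'_apply', lapMatrix_toLinearMap₂']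
  simp only [hrow, hcol] at hsum
  linarith

def starVector (u : V) : V → ℝ :=
  fun w => if w = u then G.degree u else if G.Adj u w then -1 else 0

theorem starVector_dotProduct_self (u : V) :
    G.starVector u ⬝ᵥ G.starVector u = G.degree u * (G.degree u + 1) := by
  have hsq : ∀ w, G.starVector u w * G.starVector u w =
      (if w = u then (G.degree u : ℝ) ^ 2 else 0) + if G.Adj u w then 1 else 0 := by
    intro w
    by_cases hw : w = u
    · simp [hw, starVector, sq]
    · by_cases h : G.Adj u w <;> simp [starVector, hw, h]
  rw [dotProduct, sum_congr rfl fun w _ => hsq w, sum_add_distrib, sum_ite_eq', if_pos (mem_univ u),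
    ← degree_eq_sum_if_adj]
  ring

theorem degree_mul_sq_le_starVector_lapMatrix (u : V) :
    (G.degree u : ℝ) * (G.degree u + 1) ^ 2 ≤
      G.starVector u ⬝ᵥ G.lapMatrix ℝ *ᵥ G.starVector u := by
  refine le_of_eq_of_le ?_ (G.sum_neighborFinset_sq_sub_le_dotProduct_lapMatrix_mulVec _ u)
  have hterm : ∀ j ∈ G.neighborFinset u, (G.starVector u u - G.starVector u j) ^ 2 =
      ((G.degree u : ℝ) + 1) ^ 2 := by
    intro j hj
    rw [mem_neighborFinset] at hj
    simp [starVector, hj, hj.ne']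
  rw [sum_congr rfl hterm, sum_const, card_neighborFinset_eq_degree, nsmul_eq_mul]

theorem degree_add_one_le_maxEig_lapMatrix (u : V) (hu : 0 < G.degree u) :
    (G.degree u : ℝ) + 1 ≤ maxEig (G.lapMatrix ℝ) := by
  have hnorm_pos : (0 : ℝ) < G.degree u * (G.degree u + 1) := by positivity
  have h := (G.isHermitian_lapMatrix ℝ).dotProduct_mulVec_le_maxEig_mul (G.starVector u)
  rw [starVector_dotProduct_self] at h
  refine le_of_mul_le_mul_right ?_ hnorm_pos
  linarith [G.degree_mul_sq_le_starVector_lapMatrix u]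

end SimpleGraph

theorem stmt_5_general {n : ℕ} (G : SimpleGraph (Fin n)) [DecidableRel G.Adj]
    (he : ∃ u v : Fin n, G.Adj u v) :
    (G.maxDegree : ℝ) + 1 ≤ maxEig (G.lapMatrix ℝ) := by
  obtain ⟨a, b, hab⟩ := he
  have : Nonempty (Fin n) := ⟨a⟩
  obtain ⟨u, hu⟩ := G.exists_maximal_degree_vertex
  have hdeg_pos : 0 < G.degree u :=
    hu ▸ ((G.degree_pos_iff_exists_adj a).mpr ⟨b, hab⟩).trans_le (G.degree_le_maxDegree a)
  rw [hu]
  exact G.degree_add_one_le_maxEig_lapMatrix u hdeg_pos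

theorem stmt_5 {n : ℕ} (hn : 2 ≤ n) (G : SimpleGraph (Fin n)) [DecidableRel G.Adj]
    (he : ∃ u v : Fin n, G.Adj u v) :
    (G.maxDegree : ℝ) + 1 ≤ maxEig (G.lapMatrix ℝ) :=
  stmt_5_general G he
end

section
/- If G is a simple graph on n ≥ 2 vertices with domination number γ ≥ 2, then the second smallest Laplacian eigenvalue of G satisfies λ₂(G) ≤ n - γ. -/
open SimpleGraph Finset Matrix

/-! Every vertex `v` has degree at most `n - γ`, because the complement of its neighbourhood
dominates. Since `γ ≥ 2` there are distinct non-adjacent vertices `a`, `b`; on the plane spanned by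
`1` and `e_a - e_b` the Laplacian's Rayleigh quotient is at most `(deg a + deg b) / 2 ≤ n - γ`, so
by Courant–Fischer at least two eigenvalues are `≤ n - γ`. -/

theorem List.getD_le_of_lt_countP {α : Type*} [LinearOrder α] {B d : α} :
    ∀ {l : List α} {k : ℕ}, l.Pairwise (· ≤ ·) → k < l.countP (· ≤ B) → l.getD k d ≤ B
  | [], _, _, h => by simp at h
  | a :: t, 0, hl, h => by
      obtain ⟨x, hx, hxB⟩ := List.countP_pos_iff.mp (Nat.zero_lt_of_lt h)
      rcases List.mem_cons.mp hx with rfl | hxt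
      · simpa using hxB
      · exact (List.rel_of_pairwise_cons hl hxt).trans (by simpa using hxB)
  | a :: t, k + 1, hl, h => by
      have ht : k < t.countP (· ≤ B) := by
        have := List.countP_cons (p := (· ≤ B)) (a := a) (l := t)
        split_ifs at this <;> omega
      simpa using List.getD_le_of_lt_countP hl.of_cons ht

theorem secondEig_le_of_two_le_card {ι : Type*} [Fintype ι] [DecidableEq ι] {A : Matrix ι ι ℝ}
    (hA : A.IsHermitian) {B : ℝ} (h : 2 ≤ #{i | hA.eigenvalues i ≤ B}) : secondEig A ≤ B := by
  refine List.getD_le_of_lt_countP (Multiset.pairwise_sort _ _) ?_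
  rw [← Multiset.coe_countP, eigsSorted, Multiset.sort_eq, hA.roots_charpoly_eq_eigenvalues,
    Multiset.countP_map]
  exact h

namespace Matrix.IsHermitian

variable {ι : Type*} [Fintype ι] [DecidableEq ι] {A : Matrix ι ι ℝ} (hA : A.IsHermitian)

/-- Coordinates of `y` in the orthonormal eigenbasis `hA.eigenvectorBasis`. -/
noncomputable def eigenCoords (y : ι → ℝ) : ι → ℝ :=
  star (hA.eigenvectorUnitary : Matrix ι ι ℝ) *ᵥ y

lemma eigenvectorUnitary_mulVec_eigenCoords (y : ι → ℝ) :
    (hA.eigenvectorUnitary : Matrix ι ι ℝ) *ᵥ hA.eigenCoords y = y := by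
  rw [eigenCoords, mulVec_mulVec, mem_unitaryGroup_iff.mp hA.eigenvectorUnitary.2, one_mulVec]

lemma dotProduct_eigenvectorUnitary_mulVec (y w : ι → ℝ) :
    y ⬝ᵥ ((hA.eigenvectorUnitary : Matrix ι ι ℝ) *ᵥ w) = hA.eigenCoords y ⬝ᵥ w := by
  rw [dotProduct_mulVec, eigenCoords, star_eq_conjTranspose, conjTranspose_eq_transpose_of_trivial,
    mulVec_transpose]

lemma dotProduct_self_eq_sum_eigenCoords_sq (y : ι → ℝ) :
    y ⬝ᵥ y = ∑ i, hA.eigenCoords y i ^ 2 := by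
  calc y ⬝ᵥ y = y ⬝ᵥ ((hA.eigenvectorUnitary : Matrix ι ι ℝ) *ᵥ hA.eigenCoords y) := by
        rw [eigenvectorUnitary_mulVec_eigenCoords]
    _ = ∑ i, hA.eigenCoords y i ^ 2 := by
        rw [dotProduct_eigenvectorUnitary_mulVec]
        simp only [dotProduct, sq]

lemma dotProduct_mulVec_eq_sum_eigenvalues (y : ι → ℝ) :
    y ⬝ᵥ (A *ᵥ y) = ∑ i, hA.eigenvalues i * hA.eigenCoords y i ^ 2 := by
  conv_lhs => rw [hA.spectral_theorem, Unitary.conjStarAlgAut_apply, ← mulVec_mulVec,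
    ← mulVec_mulVec, dotProduct_eigenvectorUnitary_mulVec, ← eigenCoords]
  simp only [dotProduct, mulVec_diagonal, Function.comp_apply, RCLike.ofReal_real_eq_id, id]
  exact Finset.sum_congr rfl fun i _ => by ring

lemma lt_dotProduct_mulVec_of_eigenCoords_eq_zero {B : ℝ} {y : ι → ℝ} (hy : y ≠ 0)
    (h : ∀ i, hA.eigenvalues i ≤ B → hA.eigenCoords y i = 0) :
    B * (y ⬝ᵥ y) < y ⬝ᵥ (A *ᵥ y) := by
  obtain ⟨j, hj⟩ : ∃ j, hA.eigenCoords y j ≠ 0 := by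
    by_contra! h0
    apply hy
    rw [← hA.eigenvectorUnitary_mulVec_eigenCoords y, show hA.eigenCoords y = 0 from funext h0,
      mulVec_zero]
  rw [hA.dotProduct_self_eq_sum_eigenCoords_sq, hA.dotProduct_mulVec_eq_sum_eigenvalues,
    Finset.mul_sum]
  refine Finset.sum_lt_sum (fun i _ => ?_) ⟨j, Finset.mem_univ j, ?_⟩
  · by_cases hi : hA.eigenvalues i ≤ B
    · simp [h i hi]
    · exact mul_le_mul_of_nonneg_right (not_le.mp hi).le (sq_nonneg _)
  · exact mul_lt_mul_of_pos_right (not_le.mp (mt (h j) hj)) (by positivity)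

/-- The easy half of the Courant–Fischer theorem. -/
theorem finrank_le_card_eigenvalues_le {B : ℝ} (W : Submodule ℝ (ι → ℝ))
    (hW : ∀ y ∈ W, y ⬝ᵥ (A *ᵥ y) ≤ B * (y ⬝ᵥ y)) :
    Module.finrank ℝ W ≤ #{i | hA.eigenvalues i ≤ B} := by
  set S : Finset ι := {i | hA.eigenvalues i ≤ B}
  by_contra! hlt
  let f : W →ₗ[ℝ] (S → ℝ) :=
    LinearMap.funLeft ℝ ℝ (Subtype.val : S → ι) ∘ₗ
      (star (hA.eigenvectorUnitary : Matrix ι ι ℝ)).mulVecLin ∘ₗ W.subtype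
  have hker : LinearMap.ker f ≠ ⊥ :=
    LinearMap.ker_ne_bot_of_finrank_lt (by simpa [Module.finrank_fintype_fun_eq_card] using hlt)
  obtain ⟨⟨y, hyW⟩, hyker, hy0⟩ := (Submodule.ne_bot_iff _).mp hker
  have hperp : ∀ i, hA.eigenvalues i ≤ B → hA.eigenCoords y i = 0 := fun i hi =>
    congrFun (LinearMap.mem_ker.mp hyker) ⟨i, by simpa [S] using hi⟩
  exact (hW y hyW).not_gt
    (hA.lt_dotProduct_mulVec_of_eigenCoords_eq_zero (by simpa using hy0) hperp)

end Matrix.IsHermitian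

lemma linearIndependent_one_single_sub_single {V : Type*} [DecidableEq V] {a b : V} (hab : a ≠ b) :
    LinearIndependent ℝ ![(1 : V → ℝ), Pi.single a 1 - Pi.single b 1] := by
  refine LinearIndependent.pair_iff.mpr fun s t hst => ?_
  have ha := congrFun hst a
  have hb := congrFun hst b
  simp [hab, hab.symm] at ha hb
  constructor <;> linarith

namespace SimpleGraph

variable {V : Type*} [Fintype V] (G : SimpleGraph V)

lemma domNum_le_card {X : Finset V} (hX : IsDominatingSet G X) : domNum G ≤ #X :=
  Nat.sInf_le ⟨X, hX, rfl⟩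

lemma domNum_add_degree_le [DecidableRel G.Adj] (v : V) :
    domNum G + G.degree v ≤ Fintype.card V := by
  classical
  have hdom : IsDominatingSet G (G.neighborFinset v)ᶜ := fun u hu =>
    ⟨v, by simp, by simpa using hu⟩
  calc domNum G + G.degree v ≤ #(G.neighborFinset v)ᶜ + #(G.neighborFinset v) := by
        rw [card_neighborFinset_eq_degree]
        exact Nat.add_le_add_right (G.domNum_le_card hdom) _
    _ = Fintype.card V := card_compl_add_card _

lemma exists_ne_not_adj_of_one_lt_domNum (h : 1 < domNum G) : ∃ a b, a ≠ b ∧ ¬G.Adj a b := by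
  classical
  by_contra! hadj
  cases isEmpty_or_nonempty V with
  | inl _ =>
    have : domNum G ≤ 0 := G.domNum_le_card (X := ∅) fun v => isEmptyElim v
    omega
  | inr hV =>
    obtain ⟨a⟩ := hV
    have : domNum G ≤ 1 := G.domNum_le_card (X := {a}) fun v hv =>
      ⟨a, mem_singleton_self a, hadj a v (by simpa [eq_comm] using hv)⟩
    omega

variable [DecidableEq V] [DecidableRel G.Adj]

lemma dotProduct_lapMatrix_mulVec_single_sub_single {a b : V} (hab : a ≠ b) (h : ¬G.Adj a b) :
    (Pi.single a 1 - Pi.single b 1) ⬝ᵥ (G.lapMatrix ℝ *ᵥ (Pi.single a 1 - Pi.single b 1)) =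
      G.degree a + G.degree b := by
  have h' : ¬G.Adj b a := fun hba => h hba.symm
  simp [mulVec_sub, sub_dotProduct, dotProduct_sub, single_dotProduct, lapMatrix,
    degMatrix, adjMatrix_apply, hab, hab.symm, h, h']

lemma dotProduct_lapMatrix_mulVec_smul_one_add (c : ℝ) (y : V → ℝ) :
    (c • 1 + y) ⬝ᵥ (G.lapMatrix ℝ *ᵥ (c • 1 + y)) = y ⬝ᵥ (G.lapMatrix ℝ *ᵥ y) := by
  have hL1 : G.lapMatrix ℝ *ᵥ 1 = 0 := G.lapMatrix_mulVec_const_eq_zero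
  have h1L : 1 ᵥ* G.lapMatrix ℝ = 0 := by
    rw [← mulVec_transpose, (G.isSymm_lapMatrix ℝ).eq, hL1]
  rw [mulVec_add, mulVec_smul, hL1, smul_zero, zero_add, add_dotProduct, smul_dotProduct,
    dotProduct_mulVec, h1L, zero_dotProduct, smul_zero, zero_add]

/-- `1` lies in the kernel of the Laplacian and is orthogonal to `e_a - e_b`, so on their span the
Rayleigh quotient is at most that of `e_a - e_b`, namely `(deg a + deg b) / 2`. -/
lemma dotProduct_lapMatrix_mulVec_le_of_mem_span {a b : V} (hab : a ≠ b) (h : ¬G.Adj a b)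
    {B : ℝ} (ha : G.degree a ≤ B) (hb : G.degree b ≤ B) {y : V → ℝ}
    (hy : y ∈ Submodule.span ℝ (Set.range ![(1 : V → ℝ), Pi.single a 1 - Pi.single b 1])) :
    y ⬝ᵥ (G.lapMatrix ℝ *ᵥ y) ≤ B * (y ⬝ᵥ y) := by
  obtain ⟨c, rfl⟩ := (Submodule.mem_span_range_iff_exists_fun ℝ).mp hy
  set x : V → ℝ := Pi.single a 1 - Pi.single b 1
  have hsum : ∑ i, c i • ![(1 : V → ℝ), x] i = c 0 • 1 + c 1 • x := Fin.sum_univ_two _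
  have hx1 : x ⬝ᵥ 1 = 0 := by simp [x, sub_dotProduct]
  have hxx : x ⬝ᵥ x = 2 := by
    norm_num [x, dotProduct_sub, hab, hab.symm]
  have hquad : x ⬝ᵥ (G.lapMatrix ℝ *ᵥ x) = G.degree a + G.degree b :=
    G.dotProduct_lapMatrix_mulVec_single_sub_single hab h
  have hB : 0 ≤ B := le_trans (Nat.cast_nonneg _) ha
  have hn : (0 : ℝ) ≤ (1 : V → ℝ) ⬝ᵥ 1 := by simp [dotProduct]
  rw [hsum, G.dotProduct_lapMatrix_mulVec_smul_one_add, mulVec_smul, smul_dotProduct,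
    dotProduct_smul, hquad]
  simp only [add_dotProduct, dotProduct_add, smul_dotProduct, dotProduct_smul, hx1,
    dotProduct_comm 1 x, hxx, smul_eq_mul]
  nlinarith [mul_nonneg hB (mul_nonneg (sq_nonneg (c 0)) hn), sq_nonneg (c 1)]

end SimpleGraph

theorem stmt_7_general {n : ℕ} (G : SimpleGraph (Fin n)) [DecidableRel G.Adj]
    (hγ : 2 ≤ domNum G) :
    secondEig (G.lapMatrix ℝ) ≤ (n : ℝ) - (domNum G : ℝ) := by
  obtain ⟨a, b, hab, hnadj⟩ := G.exists_ne_not_adj_of_one_lt_domNum hγ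
  have hdeg (v : Fin n) : (G.degree v : ℝ) ≤ n - domNum G := by
    have := G.domNum_add_degree_le v
    rw [Fintype.card_fin] at this
    rw [le_sub_iff_add_le']
    exact_mod_cast this
  have hL := G.isHermitian_lapMatrix ℝ
  apply secondEig_le_of_two_le_card hL
  calc 2 = Module.finrank ℝ (Submodule.span ℝ
        (Set.range ![(1 : Fin n → ℝ), Pi.single a 1 - Pi.single b 1])) := by
        rw [finrank_span_eq_card (linearIndependent_one_single_sub_single hab), Fintype.card_fin]
    _ ≤ _ := hL.finrank_le_card_eigenvalues_le _ fun y hy =>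
        G.dotProduct_lapMatrix_mulVec_le_of_mem_span hab hnadj (hdeg a) (hdeg b) hy

theorem stmt_7 {n : ℕ} (hn : 2 ≤ n) (G : SimpleGraph (Fin n)) [DecidableRel G.Adj]
    (hγ : 2 ≤ domNum G) :
    secondEig (G.lapMatrix ℝ) ≤ (n : ℝ) - (domNum G : ℝ) :=
  stmt_7_general G hγ
end

section
/- If G is a simple graph on n ≥ 2 vertices with domination number γ = 2 and λ₂(G) = n - 2, then G is the complement of a perfect matching. -/
open SimpleGraph Finset Matrix

/-!
Because `γ(G) = 2`, no vertex is adjacent to all the others, so every vertex `v` has a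
non-neighbour. If `v` had two, pick one, `w`; the vector `e_v - e_w` is orthogonal to the
constant vector, which lies in the kernel of the Laplacian, and its Rayleigh quotient is
`(deg v + deg w) / 2 ≤ ((n - 3) + (n - 2)) / 2 < n - 2`. This contradicts `λ₂ = n - 2` through
the easy half of Courant–Fischer: when at most one eigenvalue lies below `t` and `u` is an
eigenvector with eigenvalue below `t`, the Rayleigh quotient is at least `t` on `u^⊥`, since
otherwise some combination of `x ⊥ u` and `u` would have no component along the exceptional
eigenvector and still have Rayleigh quotient below `t`.
-/

theorem List.countP_lt_getD_one_le_one {α : Type*} [LinearOrder α] (d : α) :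
    ∀ {l : List α}, l.Pairwise (· ≤ ·) → l.countP (fun x => x < l.getD 1 d) ≤ 1
  | [], _ | [_], _ => List.countP_le_length.trans (by simp)
  | a :: b :: l, hl => by
    have hb : (b :: l).countP (fun x => x < b) = 0 :=
      List.countP_eq_zero.mpr fun x hx => by
        rcases List.mem_cons.mp hx with rfl | hx
        · simp
        · simpa using (List.pairwise_cons.mp hl.of_cons).1 x hx
    simp only [List.getD_cons_succ, List.getD_cons_zero, List.countP_cons, hb]
    split <;> simp

namespace Matrix.IsHermitian

variable {ι : Type*} [Fintype ι] [DecidableEq ι] {A : Matrix ι ι ℝ} (hA : A.IsHermitian)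

lemma transpose_eigenvectorUnitary :
    (hA.eigenvectorUnitary : Matrix ι ι ℝ)ᵀ = star (hA.eigenvectorUnitary : Matrix ι ι ℝ) := by
  rw [star_eq_conjTranspose, conjTranspose_eq_transpose_of_trivial]

lemma dotProduct_mulVec_eq_sum_eigenvalues_mul_sq (z : ι → ℝ) :
    z ⬝ᵥ A *ᵥ z =
      ∑ i, hA.eigenvalues i * (star (hA.eigenvectorUnitary : Matrix ι ι ℝ) *ᵥ z) i ^ 2 := by
  conv_lhs => rw [hA.spectral_theorem, Unitary.conjStarAlgAut_apply]
  rw [← mulVec_mulVec, ← mulVec_mulVec, dotProduct_mulVec, ← mulVec_transpose,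
    hA.transpose_eigenvectorUnitary]
  simp [mulVec_diagonal, dotProduct, sq, mul_left_comm]

lemma dotProduct_self_star_eigenvectorUnitary_mulVec (z : ι → ℝ) :
    (star (hA.eigenvectorUnitary : Matrix ι ι ℝ) *ᵥ z) ⬝ᵥ
      (star (hA.eigenvectorUnitary : Matrix ι ι ℝ) *ᵥ z) = z ⬝ᵥ z := by
  rw [dotProduct_mulVec, ← mulVec_transpose, ← hA.transpose_eigenvectorUnitary,
    transpose_transpose, mulVec_mulVec, hA.transpose_eigenvectorUnitary,
    Unitary.mul_star_self_of_mem hA.eigenvectorUnitary.2, one_mulVec]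

lemma mul_dotProduct_self_le_of_eigenvectorUnitary_coord_eq_zero {t : ℝ} {j : ι}
    (hj : ∀ i ≠ j, t ≤ hA.eigenvalues i) {z : ι → ℝ}
    (hz : (star (hA.eigenvectorUnitary : Matrix ι ι ℝ) *ᵥ z) j = 0) :
    t * (z ⬝ᵥ z) ≤ z ⬝ᵥ A *ᵥ z := by
  rw [hA.dotProduct_mulVec_eq_sum_eigenvalues_mul_sq,
    ← hA.dotProduct_self_star_eigenvectorUnitary_mulVec, dotProduct, Finset.mul_sum]
  refine Finset.sum_le_sum fun i _ => ?_
  rcases eq_or_ne i j with rfl | hij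
  · simp [hz]
  · rw [← sq]
    exact mul_le_mul_of_nonneg_right (hj i hij) (sq_nonneg _)

theorem mul_dotProduct_self_le_of_orthogonal_eigenvector {t μ : ℝ}
    (ht : #{i | hA.eigenvalues i < t} ≤ 1) {u : ι → ℝ} (hu : A *ᵥ u = μ • u) (hu0 : u ≠ 0)
    (hμ : μ < t) {x : ι → ℝ} (hx : u ⬝ᵥ x = 0) :
    t * (x ⬝ᵥ x) ≤ x ⬝ᵥ A *ᵥ x := by
  obtain ⟨k, -⟩ := Function.ne_iff.mp hu0
  have : Nonempty ι := ⟨k⟩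
  obtain ⟨j, hj⟩ := Finset.card_le_one_iff_subset_singleton.mp ht
  have hj' : ∀ i ≠ j, t ≤ hA.eigenvalues i := fun i hi =>
    not_lt.mp fun h => hi (Finset.mem_singleton.mp (hj (by simp [h])))
  set φ : (ι → ℝ) → ℝ := fun z => (star (hA.eigenvectorUnitary : Matrix ι ι ℝ) *ᵥ z) j
  have hQ : ∀ z, φ z = 0 → t * (z ⬝ᵥ z) ≤ z ⬝ᵥ A *ᵥ z := fun z =>
    hA.mul_dotProduct_self_le_of_eigenvectorUnitary_coord_eq_zero hj'
  have huu : 0 < u ⬝ᵥ u := by simpa using dotProduct_self_star_pos_iff.mpr hu0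
  have huAu : u ⬝ᵥ A *ᵥ u = μ * (u ⬝ᵥ u) := by rw [hu, dotProduct_smul, smul_eq_mul]
  have hxAu : x ⬝ᵥ A *ᵥ u = 0 := by rw [hu, dotProduct_smul, dotProduct_comm, hx, smul_zero]
  have huAx : u ⬝ᵥ A *ᵥ x = 0 := by
    rw [dotProduct_mulVec, ← mulVec_transpose, (isHermitian_iff_isSymm.mp hA).eq, hu,
      smul_dotProduct, hx, smul_zero]
  have hφu : φ u ≠ 0 := fun h => by nlinarith [hQ u h]
  set y := φ u • x - φ x • u
  have hφy : φ y = 0 := by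
    simp only [φ, y, mulVec_sub, mulVec_smul, Pi.sub_apply, Pi.smul_apply, smul_eq_mul]
    ring
  have hyy : y ⬝ᵥ y = φ u ^ 2 * (x ⬝ᵥ x) + φ x ^ 2 * (u ⬝ᵥ u) := by
    simp only [y, sub_dotProduct, dotProduct_sub, smul_dotProduct, dotProduct_smul, smul_eq_mul,
      dotProduct_comm x u, hx]
    ring
  have hyAy : y ⬝ᵥ A *ᵥ y = φ u ^ 2 * (x ⬝ᵥ A *ᵥ x) + φ x ^ 2 * (μ * (u ⬝ᵥ u)) := by
    simp only [y, mulVec_sub, mulVec_smul, sub_dotProduct, dotProduct_sub, smul_dotProduct,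
      dotProduct_smul, smul_eq_mul, hxAu, huAx, huAu]
    ring
  have hQy := hQ y hφy
  rw [hyy, hyAy] at hQy
  have hcomb : φ u ^ 2 * (t * (x ⬝ᵥ x) - x ⬝ᵥ A *ᵥ x) ≤ φ x ^ 2 * ((μ - t) * (u ⬝ᵥ u)) := by
    linear_combination hQy
  have hrhs : φ x ^ 2 * ((μ - t) * (u ⬝ᵥ u)) ≤ 0 :=
    mul_nonpos_of_nonneg_of_nonpos (sq_nonneg _)
      (mul_nonpos_of_nonpos_of_nonneg (by linarith) huu.le)
  have := nonpos_of_mul_nonpos_right (hcomb.trans hrhs) (sq_pos_of_ne_zero hφu)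
  linarith

lemma card_eigenvalues_lt_secondEig_le_one : #{i | hA.eigenvalues i < secondEig A} ≤ 1 := by
  have hroots : A.charpoly.roots = univ.val.map hA.eigenvalues := by
    simpa using hA.roots_charpoly_eq_eigenvalues
  rw [secondEig, eigsSorted, hroots]
  have hsorted :=
    List.countP_lt_getD_one_le_one 0 ((univ.val.map hA.eigenvalues).pairwise_sort (· ≤ ·))
  rwa [← Multiset.coe_countP, Multiset.sort_eq, Multiset.countP_map] at hsorted

end Matrix.IsHermitian

lemma Matrix.single_sub_single_dotProduct_mulVec {ι R : Type*} [Fintype ι] [DecidableEq ι]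
    [CommRing R] (A : Matrix ι ι R) (v w : ι) :
    (Pi.single v 1 - Pi.single w 1) ⬝ᵥ A *ᵥ (Pi.single v 1 - Pi.single w 1) =
      A v v - A v w - A w v + A w w := by
  simp only [mulVec_sub, mulVec_single_one, sub_dotProduct, single_dotProduct, one_mul,
    Pi.sub_apply, col_apply]
  ring

namespace SimpleGraph

variable {V : Type*} [Fintype V]

lemma exists_compl_adj_of_one_lt_domNum {G : SimpleGraph V} (h : 1 < domNum G) (v : V) :
    ∃ w, Gᶜ.Adj v w := by
  by_contra! hv
  have hdom : IsDominatingSet G {v} := fun u hu =>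
    ⟨v, mem_singleton_self v, by simpa [compl_adj, Ne.symm (mem_singleton.not.mp hu)] using hv u⟩
  have : domNum G ≤ 1 := Nat.sInf_le ⟨{v}, hdom, card_singleton v⟩
  omega

variable [DecidableEq V] (G : SimpleGraph V) [DecidableRel G.Adj]

lemma degree_add_degree_compl_add_one (v : V) :
    G.degree v + Gᶜ.degree v + 1 = Fintype.card V := by
  have := G.degree_lt_card_verts v
  rw [degree_compl]
  omega

lemma single_sub_single_dotProduct_lapMatrix_mulVec {v w : V} (hvw : v ≠ w)
    (hadj : ¬ G.Adj v w) :
    (Pi.single v 1 - Pi.single w 1) ⬝ᵥ G.lapMatrix ℝ *ᵥ (Pi.single v 1 - Pi.single w 1) =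
      G.degree v + G.degree w := by
  rw [Matrix.single_sub_single_dotProduct_mulVec]
  simp [lapMatrix, degMatrix, adjMatrix_apply, hvw, hvw.symm, hadj, G.adj_comm w v]

lemma degree_compl_le_one_of_secondEig_lapMatrix
    (hl : secondEig (G.lapMatrix ℝ) = Fintype.card V - 2) (v : V) : Gᶜ.degree v ≤ 1 := by
  by_contra! hv
  obtain ⟨w, hvw⟩ := (Gᶜ.degree_pos_iff_exists_adj v).mp (by omega)
  have hw : 1 ≤ Gᶜ.degree w := (Gᶜ.degree_pos_iff_exists_adj w).mpr ⟨v, hvw.symm⟩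
  have hsumv : (G.degree v : ℝ) + Gᶜ.degree v + 1 = Fintype.card V := by
    exact_mod_cast G.degree_add_degree_compl_add_one v
  have hsumw : (G.degree w : ℝ) + Gᶜ.degree w + 1 = Fintype.card V := by
    exact_mod_cast G.degree_add_degree_compl_add_one w
  have hv' : (2 : ℝ) ≤ Gᶜ.degree v := by exact_mod_cast hv
  have hw' : (1 : ℝ) ≤ Gᶜ.degree w := by exact_mod_cast hw
  set x : V → ℝ := Pi.single v 1 - Pi.single w 1
  have hx1 : (fun _ => 1) ⬝ᵥ x = 0 := by simp [x]
  have hxx : x ⬝ᵥ x = 2 := by norm_num [x, hvw.ne, hvw.ne.symm]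
  have hA := G.isHermitian_lapMatrix ℝ
  have hrayleigh := hA.mul_dotProduct_self_le_of_orthogonal_eigenvector
    (hl ▸ hA.card_eigenvalues_lt_secondEig_le_one)
    (G.lapMatrix_mulVec_const_eq_zero.trans (zero_smul ℝ _).symm)
    (Function.ne_iff.mpr ⟨v, one_ne_zero⟩) (by linarith) hx1
  rw [hxx, G.single_sub_single_dotProduct_lapMatrix_mulVec hvw.ne ((G.compl_adj v w).mp hvw).2]
    at hrayleigh
  linarith

end SimpleGraph

theorem stmt_9_general {n : ℕ} (G : SimpleGraph (Fin n)) [DecidableRel G.Adj]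
    (hγ : domNum G = 2) (hl : secondEig (G.lapMatrix ℝ) = (n : ℝ) - 2) :
    ∀ v : Fin n, ∃! w : Fin n, Gᶜ.Adj v w := by
  intro v
  rw [← degree_eq_one_iff_existsUnique_adj]
  have hpos :=
    (Gᶜ.degree_pos_iff_exists_adj v).mpr (G.exists_compl_adj_of_one_lt_domNum (by omega) v)
  have hle := G.degree_compl_le_one_of_secondEig_lapMatrix (by rwa [Fintype.card_fin]) v
  omega

theorem stmt_9 {n : ℕ} (hn : 2 ≤ n) (G : SimpleGraph (Fin n)) [DecidableRel G.Adj]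
    (hγ : domNum G = 2) (hl : secondEig (G.lapMatrix ℝ) = (n : ℝ) - 2) :
    ∀ v : Fin n, ∃! w : Fin n, Gᶜ.Adj v w :=
  stmt_9_general G hγ hl
end

section
/- If G is a simple graph on n vertices with minimum degree δ ≥ 1, maximum degree Δ, and m edges, then the largest adjacency eigenvalue satisfies μ(G)² ≤ 2m - (n-1)δ + (δ-1)Δ. -/
open SimpleGraph Finset Matrix

private lemma rowSum_bound {n : ℕ} (G : SimpleGraph (Fin n)) [DecidableRel G.Adj]
    (hδ : 1 ≤ G.minDegree) (i : Fin n) :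
    ((∑ k ∈ G.neighborFinset i, G.degree k : ℕ) : ℝ) ≤
      2 * (G.edgeFinset.card : ℝ) - ((n : ℝ) - 1) * (G.minDegree : ℝ) +
        ((G.minDegree : ℝ) - 1) * (G.maxDegree : ℝ) := by
  have hn : 0 < n := Fin.pos i
  have hdeg : G.degree i ≤ n - 1 := by
    have := G.degree_lt_card_verts i
    simp [Fintype.card_fin] at this
    omega
  have hsum : ∑ v, G.degree v = 2 * G.edgeFinset.card := G.sum_degrees_eq_twice_card_edges
  have hsplit : ∑ v, G.degree v =
      ∑ k ∈ G.neighborFinset i, G.degree k + ∑ k ∈ (G.neighborFinset i)ᶜ, G.degree k := by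
    rw [Finset.sum_add_sum_compl]
  have hi_mem : i ∈ (G.neighborFinset i)ᶜ := by
    simp [SimpleGraph.irrefl]
  have hcard : ((G.neighborFinset i)ᶜ).card = n - G.degree i := by
    simp [Finset.card_compl, SimpleGraph.card_neighborFinset_eq_degree]
  have hcomp : G.degree i + (n - 1 - G.degree i) * G.minDegree ≤
      ∑ k ∈ (G.neighborFinset i)ᶜ, G.degree k := by
    rw [← Finset.sum_erase_add _ _ hi_mem]
    have h1 : (n - 1 - G.degree i) * G.minDegree ≤
        ∑ k ∈ ((G.neighborFinset i)ᶜ).erase i, G.degree k := by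
      calc (n - 1 - G.degree i) * G.minDegree
          = ∑ _k ∈ ((G.neighborFinset i)ᶜ).erase i, G.minDegree := by
            rw [Finset.sum_const, Finset.card_erase_of_mem hi_mem, hcard, smul_eq_mul]
            congr 1
            omega
        _ ≤ _ := Finset.sum_le_sum fun k _ => G.minDegree_le_degree k
    omega
  have key : ∑ k ∈ G.neighborFinset i, G.degree k + G.degree i +
      (n - 1 - G.degree i) * G.minDegree ≤ 2 * G.edgeFinset.card := by omega
  have hΔ : G.degree i ≤ G.maxDegree := G.degree_le_maxDegree i
  have hcast : ((n - 1 - G.degree i : ℕ) : ℝ) = (n : ℝ) - 1 - G.degree i := by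
    push_cast [Nat.cast_sub (by omega : G.degree i ≤ n - 1), Nat.cast_sub (by omega : 1 ≤ n)]
    ring
  have key' : (∑ k ∈ G.neighborFinset i, G.degree k : ℝ) + G.degree i +
      ((n:ℝ) - 1 - G.degree i) * G.minDegree ≤ 2 * G.edgeFinset.card := by
    rw [← hcast]
    exact_mod_cast key
  have h1 : (1:ℝ) ≤ G.minDegree := by exact_mod_cast hδ
  have hΔ' : (G.degree i : ℝ) ≤ G.maxDegree := by exact_mod_cast hΔ
  push_cast
  nlinarith [key', mul_nonneg (sub_nonneg.2 h1) (sub_nonneg.2 hΔ')]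

private lemma eig_sq_le_rowSum {n : ℕ} (G : SimpleGraph (Fin n)) [DecidableRel G.Adj]
    (μ : ℝ) (v : Fin n → ℝ)
    (hv : v ≠ 0) (hev : (G.adjMatrix ℝ).mulVec v = μ • v) :
    ∃ i : Fin n, μ ^ 2 ≤ ∑ k ∈ G.neighborFinset i, (G.degree k : ℝ) := by
  obtain ⟨j, hj⟩ := Function.ne_iff.mp hv
  obtain ⟨i, -, hi⟩ := Finset.exists_max_image (univ : Finset (Fin n)) (fun j => |v j|)
    ⟨j, mem_univ j⟩
  simp only [mem_univ, forall_true_left] at hi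
  have hvi : 0 < |v i| := lt_of_lt_of_le (abs_pos.mpr hj) (hi j)
  have h2 : (G.adjMatrix ℝ).mulVec ((G.adjMatrix ℝ).mulVec v) = (μ ^ 2) • v := by
    rw [hev, mulVec_smul, hev, smul_smul, sq]
  have hE : μ ^ 2 * v i = ∑ k ∈ G.neighborFinset i, ∑ l ∈ G.neighborFinset k, v l := by
    have := congrFun h2 i
    simp only [Pi.smul_apply, smul_eq_mul] at this
    rw [← this]
    simp [adjMatrix_mulVec_apply]
  have hb : |∑ k ∈ G.neighborFinset i, ∑ l ∈ G.neighborFinset k, v l| ≤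
      (∑ k ∈ G.neighborFinset i, (G.degree k : ℝ)) * |v i| := by
    calc |∑ k ∈ G.neighborFinset i, ∑ l ∈ G.neighborFinset k, v l|
        ≤ ∑ k ∈ G.neighborFinset i, |∑ l ∈ G.neighborFinset k, v l| :=
          Finset.abs_sum_le_sum_abs _ _
      _ ≤ ∑ k ∈ G.neighborFinset i, ∑ l ∈ G.neighborFinset k, |v l| :=
          Finset.sum_le_sum fun k _ => Finset.abs_sum_le_sum_abs _ _
      _ ≤ ∑ k ∈ G.neighborFinset i, ∑ l ∈ G.neighborFinset k, |v i| :=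
          Finset.sum_le_sum fun k _ => Finset.sum_le_sum fun l _ => hi l
      _ = (∑ k ∈ G.neighborFinset i, (G.degree k : ℝ)) * |v i| := by
          simp [Finset.sum_const, card_neighborFinset_eq_degree, Finset.sum_mul]
  refine ⟨i, ?_⟩
  have hfin : μ ^ 2 * |v i| ≤ (∑ k ∈ G.neighborFinset i, (G.degree k : ℝ)) * |v i| := by
    calc μ ^ 2 * |v i| = |μ ^ 2 * v i| := by rw [abs_mul, abs_of_nonneg (sq_nonneg μ)]
      _ ≤ _ := by rw [hE]; exact hb
  exact le_of_mul_le_mul_right hfin hvi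

theorem stmt_15 {n : ℕ} (G : SimpleGraph (Fin n)) [DecidableRel G.Adj]
    (hδ : 1 ≤ G.minDegree) :
    maxEig (G.adjMatrix ℝ) ^ 2 ≤
      2 * (G.edgeFinset.card : ℝ) - ((n : ℝ) - 1) * (G.minDegree : ℝ) +
        ((G.minDegree : ℝ) - 1) * (G.maxDegree : ℝ) := by
  classical
  have hn : 0 < n := by
    rcases Nat.eq_zero_or_pos n with h | h
    · subst h; simp [SimpleGraph.minDegree] at hδ
    · exact h
  set B : ℝ := 2 * (G.edgeFinset.card : ℝ) - ((n : ℝ) - 1) * (G.minDegree : ℝ) +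
      ((G.minDegree : ℝ) - 1) * (G.maxDegree : ℝ) with hBdef
  set S : Set ℝ := {μ : ℝ | ∃ v : Fin n → ℝ, v ≠ 0 ∧ (G.adjMatrix ℝ).mulVec v = μ • v}
  have hB : ∀ μ ∈ S, μ ^ 2 ≤ B := by
    rintro μ ⟨v, hv, hev⟩
    obtain ⟨i, hle⟩ := eig_sq_le_rowSum G μ v hv hev
    refine hle.trans ?_
    have := rowSum_bound G hδ i
    rw [Nat.cast_sum] at this
    exact this
  -- nonempty
  have hH : (G.adjMatrix ℝ).IsHermitian := by
    rw [Matrix.IsHermitian, conjTranspose_eq_transpose_of_trivial]; exact isSymm_adjMatrix G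
  have : Nonempty (Fin n) := ⟨⟨0, hn⟩⟩
  obtain ⟨i0⟩ := this
  have hμ₀ : hH.eigenvalues i0 ∈ S := by
    refine ⟨⇑(hH.eigenvectorBasis i0), ?_, hH.mulVec_eigenvectorBasis i0⟩
    have hne := hH.eigenvectorBasis.toBasis.ne_zero i0
    rw [OrthonormalBasis.coe_toBasis] at hne
    intro h
    exact hne (by ext k; exact congrFun h k)
  set μ₀ := hH.eigenvalues i0
  have hB0 : 0 ≤ B := le_trans (sq_nonneg μ₀) (hB μ₀ hμ₀)
  have habs : ∀ μ ∈ S, |μ| ≤ Real.sqrt B := fun μ h => by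
    rw [← Real.sqrt_sq_eq_abs]; exact Real.sqrt_le_sqrt (hB μ h)
  have hbdd : BddAbove S := ⟨Real.sqrt B, fun μ h => (abs_le.1 (habs μ h)).2⟩
  have hup : sSup S ≤ Real.sqrt B := csSup_le ⟨μ₀, hμ₀⟩ fun μ h => (abs_le.1 (habs μ h)).2
  have hlow : -Real.sqrt B ≤ sSup S :=
    le_trans (abs_le.1 (habs μ₀ hμ₀)).1 (le_csSup hbdd hμ₀)
  have : maxEig (G.adjMatrix ℝ) = sSup S := rfl
  rw [this]
  calc sSup S ^ 2 ≤ Real.sqrt B ^ 2 := sq_le_sq' hlow hup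
    _ = B := Real.sq_sqrt hB0
end

section
/- If G is a simple graph on n vertices with m edges and minimum degree δ ≥ 1, then the largest adjacency eigenvalue satisfies μ(G) ≤ (δ - 1 + √(8m - 4δn + (δ+1)²))/2. -/
open SimpleGraph Finset Matrix

set_option maxHeartbeats 2000000 in
theorem stmt_16 {n : ℕ} (G : SimpleGraph (Fin n)) [DecidableRel G.Adj]
    (hδ : 1 ≤ G.minDegree) :
    maxEig (G.adjMatrix ℝ) ≤
      ((G.minDegree : ℝ) - 1 +
        Real.sqrt (8 * (G.edgeFinset.card : ℝ) - 4 * (G.minDegree : ℝ) * (n : ℝ) +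
          ((G.minDegree : ℝ) + 1) ^ 2)) / 2 := by
  classical
  set δ : ℝ := (G.minDegree : ℝ) with hδdef
  set m : ℝ := (G.edgeFinset.card : ℝ) with hmdef
  have hδ1 : (1:ℝ) ≤ δ := by rw [hδdef]; exact_mod_cast hδ
  have hdeg : ∀ v, δ ≤ (G.degree v : ℝ) := fun v => by
    rw [hδdef]; exact_mod_cast G.minDegree_le_degree v
  have hhand : (∑ v, (G.degree v : ℝ)) = 2 * m := by
    rw [hmdef]
    exact_mod_cast G.sum_degrees_eq_twice_card_edges
  have hmn : δ * n ≤ 2 * m := by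
    have h1 : (n:ℝ) * δ ≤ ∑ v, (G.degree v : ℝ) := by
      calc (n:ℝ) * δ = ∑ _v : Fin n, δ := by
            rw [Finset.sum_const, Finset.card_univ, Fintype.card_fin, nsmul_eq_mul]
        _ ≤ ∑ v, (G.degree v : ℝ) := Finset.sum_le_sum fun v _ => hdeg v
    linarith [hhand]
  set X : ℝ := 8 * m - 4 * δ * n + (δ + 1) ^ 2 with hXdef
  have hX : (δ + 1) ^ 2 ≤ X := by rw [hXdef]; linarith
  have hXnn : (0:ℝ) ≤ X := le_trans (by positivity) hX
  have hsq : δ + 1 ≤ Real.sqrt X := by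
    have h := Real.sqrt_le_sqrt hX
    rwa [Real.sqrt_sq (by positivity)] at h
  have hRHS : δ ≤ (δ - 1 + Real.sqrt X) / 2 := by linarith
  rw [maxEig]
  apply Real.sSup_le _ (by linarith)
  rintro μ ⟨x, hx0, hev⟩
  by_cases hμδ : μ ≤ δ
  · linarith
  push_neg at hμδ
  have hμ0 : (0:ℝ) < μ := by linarith
  -- nonempty vertex set
  have hn : n ≠ 0 := by
    rintro rfl
    exact hx0 (funext fun i => i.elim0)
  -- eigen equation pointwise
  have heig : ∀ i, (∑ j ∈ G.neighborFinset i, x j) = μ * x i := by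
    intro i
    have h := congrFun hev i
    rw [SimpleGraph.adjMatrix_mulVec_apply] at h
    simpa using h
  set y : Fin n → ℝ := fun i => |x i| with hy
  have hynn : ∀ i, 0 ≤ y i := fun i => abs_nonneg _
  obtain ⟨u, -, hu⟩ := Finset.exists_max_image Finset.univ y
    ⟨⟨0, Nat.pos_of_ne_zero hn⟩, Finset.mem_univ _⟩
  have hu' : ∀ w, y w ≤ y u := fun w => hu w (Finset.mem_univ w)
  have hc : 0 < y u := by
    obtain ⟨i, hi⟩ : ∃ i, x i ≠ 0 := by
      by_contra h; push_neg at h; exact hx0 (funext h)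
    exact lt_of_lt_of_le (abs_pos.2 hi) (hu' i)
  -- subeigenvector inequality
  have h1 : ∀ i, μ * y i ≤ ∑ j ∈ G.neighborFinset i, y j := by
    intro i
    have h2 : μ * y i = |∑ j ∈ G.neighborFinset i, x j| := by
      rw [heig i, abs_mul, abs_of_pos hμ0]
    rw [h2]
    exact Finset.abs_sum_le_sum_abs _ _
  -- step 1 : S ≥ y u + μ y u
  have hS1 : y u + μ * y u ≤ ∑ w, y w := by
    have h2 : ∑ j ∈ G.neighborFinset u, y j ≤ ∑ j ∈ Finset.univ.erase u, y j := by
      apply Finset.sum_le_sum_of_subset_of_nonneg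
      · intro j hj
        rw [Finset.mem_erase]
        rw [SimpleGraph.mem_neighborFinset] at hj
        exact ⟨(G.ne_of_adj hj).symm, Finset.mem_univ j⟩
      · intro j _ _; exact hynn j
    have h3 : ∑ w, y w = y u + ∑ j ∈ Finset.univ.erase u, y j :=
      (Finset.add_sum_erase _ _ (Finset.mem_univ u)).symm
    have h4 := h1 u
    linarith
  -- step 2 : μ S ≤ ∑ deg w * y w
  have hcol : ∀ j, (∑ i, ((G.adjMatrix ℝ) i j)) = (G.degree j : ℝ) := by
    intro j
    have h2 : ∀ i : Fin n, (G.adjMatrix ℝ) i j = if G.Adj j i then (1:ℝ) else 0 := by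
      intro i
      rw [SimpleGraph.adjMatrix_apply]
      simp [G.adj_comm]
    rw [Finset.sum_congr rfl fun i _ => h2 i, Finset.sum_boole]
    congr 1
    rw [SimpleGraph.degree, SimpleGraph.neighborFinset_eq_filter]
  have hS2 : μ * (∑ w, y w) ≤ ∑ w, (G.degree w : ℝ) * y w := by
    have h2 : ∀ i, (∑ j ∈ G.neighborFinset i, y j) = ∑ j, (G.adjMatrix ℝ) i j * y j := by
      intro i
      rw [← SimpleGraph.adjMatrix_mulVec_apply]
      rfl
    have h3 : μ * (∑ w, y w) ≤ ∑ i, ∑ j, (G.adjMatrix ℝ) i j * y j := by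
      rw [Finset.mul_sum]
      apply Finset.sum_le_sum
      intro i _
      rw [← h2 i]
      exact h1 i
    have h4 : (∑ i, ∑ j, (G.adjMatrix ℝ) i j * y j) = ∑ j, (G.degree j : ℝ) * y j := by
      rw [Finset.sum_comm]
      refine Finset.sum_congr rfl fun j _ => ?_
      rw [← Finset.sum_mul, hcol j]
    linarith
  -- step 3 : nonneg sum
  have hS3 : (0:ℝ) ≤ ∑ w, ((G.degree w : ℝ) - δ) * (y u - y w) :=
    Finset.sum_nonneg fun w _ => mul_nonneg (by linarith [hdeg w]) (by linarith [hu' w])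
  have hexp : (∑ w, ((G.degree w : ℝ) - δ) * (y u - y w))
      = (∑ w, (G.degree w : ℝ)) * y u - (n:ℝ) * (δ * y u)
        - (∑ w, (G.degree w : ℝ) * y w) + δ * (∑ w, y w) := by
    have hterm : ∀ w : Fin n, ((G.degree w : ℝ) - δ) * (y u - y w)
        = (G.degree w : ℝ) * y u - δ * y u - (G.degree w : ℝ) * y w + δ * y w :=
      fun w => by ring
    simp only [hterm]
    rw [Finset.sum_add_distrib, Finset.sum_sub_distrib, Finset.sum_sub_distrib,
      ← Finset.sum_mul, Finset.sum_const, Finset.card_univ, Fintype.card_fin, nsmul_eq_mul,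
      ← Finset.mul_sum]
  -- combine
  set S : ℝ := ∑ w, y w with hSdef
  set DY : ℝ := ∑ w, (G.degree w : ℝ) * y w with hDYdef
  have hA : (0:ℝ) ≤ 2 * m * y u - (n:ℝ) * (δ * y u) - DY + δ * S := by
    rw [hexp, hhand] at hS3
    linarith [hS3]
  have hB : (μ - δ) * S ≥ (μ - δ) * (y u + μ * y u) :=
    mul_le_mul_of_nonneg_left hS1 (by linarith)
  have hkey : μ ^ 2 - (δ - 1) * μ ≤ 2 * m - δ * n + δ := by
    have h5 : y u * (2 * m - δ * n) ≥ (μ - δ) * S := by nlinarith [hS2, hA]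
    have h6 : y u * (2 * m - δ * n) ≥ y u * ((μ - δ) * (1 + μ)) := by nlinarith
    have h7 : 2 * m - δ * n ≥ (μ - δ) * (1 + μ) :=
      le_of_mul_le_mul_left (by linarith [h6]) hc
    nlinarith [h7]
  -- finish via sqrt
  have hs := Real.sq_sqrt hXnn
  have hsnn := Real.sqrt_nonneg X
  nlinarith [hs, hsnn, hkey, sq_nonneg (2 * μ - (δ - 1) - Real.sqrt X)]
end

section
/- If G is a simple graph on n vertices with m edges and minimum degree at least 1, then the largest adjacency eigenvalue satisfies μ(G) ≤ √(2m - n + 1). -/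
open SimpleGraph Finset Matrix

lemma hong_key {n : ℕ} (G : SimpleGraph (Fin n)) [DecidableRel G.Adj]
    (hδ : 1 ≤ G.minDegree) (u : Fin n) :
    (∑ t ∈ G.neighborFinset u, G.degree t) + (n - 1) ≤ 2 * G.edgeFinset.card := by
  have hsum := G.sum_degrees_eq_twice_card_edges
  have hsplit : ∑ t ∈ G.neighborFinset u, G.degree t
      + ∑ t ∈ (G.neighborFinset u)ᶜ, G.degree t = ∑ t, G.degree t :=
    Finset.sum_add_sum_compl _ _
  have hu : u ∈ (G.neighborFinset u)ᶜ := by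
    simp [SimpleGraph.mem_neighborFinset]
  have hsplit2 : ∑ t ∈ (G.neighborFinset u)ᶜ, G.degree t
      = G.degree u + ∑ t ∈ (G.neighborFinset u)ᶜ \ {u}, G.degree t :=
    Finset.sum_eq_add_sum_sdiff_singleton_of_mem hu _
  have hrest : ((G.neighborFinset u)ᶜ \ {u}).card
      ≤ ∑ t ∈ (G.neighborFinset u)ᶜ \ {u}, G.degree t := by
    rw [Finset.card_eq_sum_ones]
    exact Finset.sum_le_sum fun t _ => le_trans hδ (G.minDegree_le_degree t)
  have hcard : ((G.neighborFinset u)ᶜ \ {u}).card = n - G.degree u - 1 := by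
    rw [Finset.card_sdiff_of_subset (by simp [hu]), Finset.card_compl, Finset.card_singleton]
    simp [SimpleGraph.card_neighborFinset_eq_degree]
  have h1 : 1 ≤ n - G.degree u := by
    have := Finset.card_pos.mpr ⟨u, hu⟩
    rwa [Finset.card_compl, SimpleGraph.card_neighborFinset_eq_degree, Fintype.card_fin] at this
  have h2 : G.degree u ≤ n := by
    have := (G.neighborFinset u).card_le_univ
    simpa [SimpleGraph.card_neighborFinset_eq_degree] using this
  omega

theorem stmt_17 {n : ℕ} (G : SimpleGraph (Fin n)) [DecidableRel G.Adj]
    (hδ : 1 ≤ G.minDegree) :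
    maxEig (G.adjMatrix ℝ) ≤ Real.sqrt (2 * (G.edgeFinset.card : ℝ) - (n : ℝ) + 1) := by
  apply Real.sSup_le _ (Real.sqrt_nonneg _)
  rintro μ ⟨v, hv, hAv⟩
  -- pick u maximizing |v u|
  obtain ⟨i0, hi0⟩ : ∃ i, v i ≠ 0 := by
    by_contra h; push_neg at h; exact hv (funext h)
  obtain ⟨u, -, hu⟩ := Finset.exists_max_image Finset.univ (fun i => |v i|)
    ⟨i0, Finset.mem_univ i0⟩
  have hM : 0 < |v u| := lt_of_lt_of_le (abs_pos.mpr hi0) (hu i0 (Finset.mem_univ i0))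
  -- A² v = μ² v
  have h2 : (G.adjMatrix ℝ).mulVec ((G.adjMatrix ℝ).mulVec v) = (μ ^ 2) • v := by
    rw [hAv, Matrix.mulVec_smul, hAv, smul_smul, sq]
  have h3 : μ ^ 2 * v u = ∑ t ∈ G.neighborFinset u, ∑ s ∈ G.neighborFinset t, v s := by
    have := congrFun h2 u
    rw [SimpleGraph.adjMatrix_mulVec_apply] at this
    simp only [Pi.smul_apply, smul_eq_mul] at this
    rw [← this]
    exact Finset.sum_congr rfl fun t _ => SimpleGraph.adjMatrix_mulVec_apply _ _ _
  -- bound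
  have hbound : μ ^ 2 * |v u| ≤ (∑ t ∈ G.neighborFinset u, (G.degree t : ℝ)) * |v u| := by
    calc μ ^ 2 * |v u| = |μ ^ 2 * v u| := by
          rw [abs_mul, abs_of_nonneg (sq_nonneg μ)]
      _ = |∑ t ∈ G.neighborFinset u, ∑ s ∈ G.neighborFinset t, v s| := by rw [h3]
      _ ≤ ∑ t ∈ G.neighborFinset u, |∑ s ∈ G.neighborFinset t, v s| :=
          Finset.abs_sum_le_sum_abs _ _
      _ ≤ ∑ t ∈ G.neighborFinset u, (G.degree t : ℝ) * |v u| := by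
          refine Finset.sum_le_sum fun t _ => ?_
          calc |∑ s ∈ G.neighborFinset t, v s| ≤ ∑ s ∈ G.neighborFinset t, |v s| :=
                Finset.abs_sum_le_sum_abs _ _
            _ ≤ ∑ s ∈ G.neighborFinset t, |v u| :=
                Finset.sum_le_sum fun s _ => hu s (Finset.mem_univ s)
            _ = (G.degree t : ℝ) * |v u| := by
                rw [Finset.sum_const, SimpleGraph.card_neighborFinset_eq_degree]
                simp [nsmul_eq_mul]
      _ = (∑ t ∈ G.neighborFinset u, (G.degree t : ℝ)) * |v u| := by
          rw [Finset.sum_mul]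
  have hsq : μ ^ 2 ≤ 2 * (G.edgeFinset.card : ℝ) - (n : ℝ) + 1 := by
    have hμ2 : μ ^ 2 ≤ ∑ t ∈ G.neighborFinset u, (G.degree t : ℝ) :=
      le_of_mul_le_mul_right hbound hM
    refine hμ2.trans ?_
    have hk := hong_key G hδ u
    have hn : 1 ≤ n := Fin.pos u
    have : ((∑ t ∈ G.neighborFinset u, G.degree t : ℕ) : ℝ) + ((n : ℝ) - 1)
        ≤ 2 * (G.edgeFinset.card : ℝ) := by
      have := (Nat.cast_le (α := ℝ)).mpr hk
      push_cast [Nat.cast_sub hn] at this ⊢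
      linarith
    push_cast at this ⊢
    linarith
  calc μ ≤ |μ| := le_abs_self μ
    _ = Real.sqrt (μ ^ 2) := (Real.sqrt_sq_eq_abs μ).symm
    _ ≤ _ := Real.sqrt_le_sqrt hsq
end
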